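/- arXiv:2008.00555 — 3 statements merged into one kernel-verified Lean document; each statement's English description precedes it below -/
import Mathlib

section
/- Define s_i⁰(x) = inf { s : P(J_i(x) ≤ s) > 0 }, the minimum attainable cost of the random route-switching process. Then s_i⁰ satisfies the dynamic programming relation s_i⁰(x) = K_i(x) + min { s_j⁰(F_i(x)) : j ∈ M with p_{ij} > 0 } for x ∉ Q, and s_i⁰(x) = q_i(x) for x ∈ Q, provided every trajectory reaches Q almost surely and the state space is finite. -/
open Classical in
/-- Probability that the random route-switching process, started at node `x`
using route `i` for the first step, terminates in `Q` within `n` steps with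
total cumulative cost (running plus terminal) at most `s`. -/
noncomputable def reachCDF {X : Type*} {M : ℕ} (Q : Set X)
    (F : Fin M → X → X) (K : Fin M → X → ℝ) (q : Fin M → X → ℝ)
    (p : Fin M → Fin M → ℝ) : ℕ → Fin M → X → ℝ → ℝ
  | 0, i, x, s => if x ∈ Q ∧ q i x ≤ s then 1 else 0
  | n + 1, i, x, s =>
      if x ∈ Q then (if q i x ≤ s then 1 else 0)
      else ∑ j, p i j * reachCDF Q F K q p n j (F i x) (s - K i x)

/-- The CDF `w_i(x,s) = P(J_i(x) ≤ s)` of the random cumulative cost, as the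
monotone limit of the finite-horizon probabilities. -/
noncomputable def costCDF {X : Type*} {M : ℕ} (Q : Set X)
    (F : Fin M → X → X) (K : Fin M → X → ℝ) (q : Fin M → X → ℝ)
    (p : Fin M → Fin M → ℝ) (i : Fin M) (x : X) (s : ℝ) : ℝ :=
  ⨆ n : ℕ, reachCDF Q F K q p n i x s

/-- The minimum attainable cost `s_i⁰(x) = inf { s : P(J_i(x) ≤ s) > 0 }`. -/
noncomputable def minCost {X : Type*} {M : ℕ} (Q : Set X)
    (F : Fin M → X → X) (K : Fin M → X → ℝ) (q : Fin M → X → ℝ)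
    (p : Fin M → Fin M → ℝ) (i : Fin M) (x : X) : ℝ :=
  sInf {s : ℝ | 0 < costCDF Q F K q p i x s}

/-!
Off `Q` the finite-horizon probabilities satisfy
`reachCDF (n+1) i x s = ∑ⱼ p i j * reachCDF n j (F i x) (s - K i x)`, a sum of nonnegative
terms, so `P(J_i(x) ≤ s) > 0` iff `P(J_j(F_i x) ≤ s - K_i(x)) > 0` for some `j` with `p_ij > 0`.
The set of such levels `s` is thus the translate by `K_i(x)` of a union over the admissible `j`,
and its infimum is `K_i(x)` plus the least of the infima. Nonnegative costs keep these sets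
bounded below and almost sure termination makes them nonempty, as `sInf` on `ℝ` requires.
-/

open Filter Set

theorem csInf_biUnion_eq_csInf_image {α ι : Type*} [ConditionallyCompleteLattice α]
    {J : Set ι} {A : ι → Set α} (hJ : J.Nonempty) (hA : ∀ j ∈ J, (A j).Nonempty)
    (hb : BddBelow (⋃ j ∈ J, A j)) :
    sInf (⋃ j ∈ J, A j) = sInf ((fun j => sInf (A j)) '' J) := by
  have hAb : ∀ j ∈ J, BddBelow (A j) := fun j hj => hb.mono (subset_biUnion_of_mem hj)
  obtain ⟨b, hb⟩ := hb
  have himage : BddBelow ((fun j => sInf (A j)) '' J) := by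
    refine ⟨b, ?_⟩
    rintro _ ⟨j, hj, rfl⟩
    exact le_csInf (hA j hj) fun a ha => hb (mem_biUnion hj ha)
  apply le_antisymm
  · refine le_csInf (hJ.image _) ?_
    rintro _ ⟨j, hj, rfl⟩
    exact csInf_le_csInf ⟨b, hb⟩ (hA j hj) (subset_biUnion_of_mem hj)
  · obtain ⟨j, hj⟩ := hJ
    refine le_csInf ⟨_, mem_biUnion hj (hA j hj).some_mem⟩ fun a ha => ?_
    obtain ⟨k, hk, ha⟩ := mem_iUnion₂.1 ha
    exact (csInf_le himage ⟨k, hk, rfl⟩).trans (csInf_le (hAb k hk) ha)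

def attainableCosts {X : Type*} {M : ℕ} (Q : Set X)
    (F : Fin M → X → X) (K : Fin M → X → ℝ) (q : Fin M → X → ℝ)
    (p : Fin M → Fin M → ℝ) (i : Fin M) (x : X) : Set ℝ :=
  {s | 0 < costCDF Q F K q p i x s}

section RouteSwitching

variable {X : Type*} {M : ℕ} {Q : Set X} {F : Fin M → X → X} {K : Fin M → X → ℝ}
  {q : Fin M → X → ℝ} {p : Fin M → Fin M → ℝ} {i : Fin M} {x : X} {s : ℝ}

theorem minCost_eq_sInf_attainableCosts :
    minCost Q F K q p i x = sInf (attainableCosts Q F K q p i x) := rfl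

theorem reachCDF_nonneg (hp0 : ∀ i j, 0 ≤ p i j) (n : ℕ) (i : Fin M) (x : X) (s : ℝ) :
    0 ≤ reachCDF Q F K q p n i x s := by
  induction n generalizing i x s with
  | zero => rw [reachCDF]; positivity
  | succ n ih =>
    rw [reachCDF]
    split
    · positivity
    · exact Finset.sum_nonneg fun j _ => mul_nonneg (hp0 i j) (ih j _ _)

theorem reachCDF_le_one (hp0 : ∀ i j, 0 ≤ p i j) (hp1 : ∀ i, ∑ j, p i j = 1)
    (n : ℕ) (i : Fin M) (x : X) (s : ℝ) :
    reachCDF Q F K q p n i x s ≤ 1 := by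
  induction n generalizing i x s with
  | zero => rw [reachCDF]; split <;> norm_num
  | succ n ih =>
    rw [reachCDF]
    split
    · split <;> norm_num
    · calc ∑ j, p i j * reachCDF Q F K q p n j (F i x) (s - K i x)
          ≤ ∑ j, p i j := Finset.sum_le_sum fun j _ => mul_le_of_le_one_right (hp0 i j) (ih j _ _)
        _ = 1 := hp1 i

theorem costCDF_pos_iff_exists_reachCDF_pos (hp0 : ∀ i j, 0 ≤ p i j)
    (hp1 : ∀ i, ∑ j, p i j = 1) :
    0 < costCDF Q F K q p i x s ↔ ∃ n, 0 < reachCDF Q F K q p n i x s :=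
  lt_ciSup_iff ⟨1, by rintro _ ⟨n, rfl⟩; exact reachCDF_le_one hp0 hp1 n i x s⟩

theorem reachCDF_zero_of_notMem (hx : x ∉ Q) : reachCDF Q F K q p 0 i x s = 0 := by
  simp [reachCDF, hx]

theorem reachCDF_succ_pos_iff_of_notMem (hp0 : ∀ i j, 0 ≤ p i j) (hx : x ∉ Q) (n : ℕ) :
    0 < reachCDF Q F K q p (n + 1) i x s ↔
      ∃ j, 0 < p i j ∧ 0 < reachCDF Q F K q p n j (F i x) (s - K i x) := by
  rw [reachCDF, if_neg hx,
    Finset.sum_pos_iff_of_nonneg fun j _ => mul_nonneg (hp0 i j) (reachCDF_nonneg hp0 _ _ _ _)]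
  simp only [Finset.mem_univ, true_and]
  refine exists_congr fun j => ⟨fun h => ?_, fun h => mul_pos h.1 h.2⟩
  exact ⟨pos_of_mul_pos_left h (reachCDF_nonneg hp0 _ _ _ _), pos_of_mul_pos_right h (hp0 i j)⟩

theorem costCDF_pos_iff_of_notMem (hp0 : ∀ i j, 0 ≤ p i j) (hp1 : ∀ i, ∑ j, p i j = 1)
    (hx : x ∉ Q) :
    0 < costCDF Q F K q p i x s ↔
      ∃ j, 0 < p i j ∧ 0 < costCDF Q F K q p j (F i x) (s - K i x) := by
  simp only [costCDF_pos_iff_exists_reachCDF_pos hp0 hp1]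
  constructor
  · rintro ⟨_ | n, hn⟩
    · exact absurd hn (reachCDF_zero_of_notMem hx).not_gt
    · obtain ⟨j, hj, hn⟩ := (reachCDF_succ_pos_iff_of_notMem hp0 hx n).1 hn
      exact ⟨j, hj, n, hn⟩
  · rintro ⟨j, hj, n, hn⟩
    exact ⟨n + 1, (reachCDF_succ_pos_iff_of_notMem hp0 hx n).2 ⟨j, hj, hn⟩⟩

theorem attainableCosts_of_notMem (hp0 : ∀ i j, 0 ≤ p i j) (hp1 : ∀ i, ∑ j, p i j = 1)
    (hx : x ∉ Q) :
    attainableCosts Q F K q p i x =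
      (K i x + ·) '' ⋃ j ∈ {j | 0 < p i j}, attainableCosts Q F K q p j (F i x) := by
  ext s
  simp only [attainableCosts, mem_ofPred_eq, costCDF_pos_iff_of_notMem hp0 hp1 hx, mem_image,
    mem_iUnion, exists_prop]
  constructor
  · rintro ⟨j, hj, hs⟩
    exact ⟨s - K i x, ⟨j, hj, hs⟩, add_sub_cancel _ _⟩
  · rintro ⟨t, ⟨j, hj, ht⟩, rfl⟩
    exact ⟨j, hj, by rwa [add_sub_cancel_left]⟩

theorem reachCDF_of_neg (hK : ∀ i x, 0 ≤ K i x) (hq : ∀ i, ∀ x ∈ Q, 0 ≤ q i x) (n : ℕ)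
    (i : Fin M) (x : X) {s : ℝ} (hs : s < 0) : reachCDF Q F K q p n i x s = 0 := by
  induction n generalizing i x s with
  | zero =>
    rw [reachCDF, if_neg]
    exact fun ⟨hxQ, hqs⟩ => (hq i x hxQ).not_gt (hqs.trans_lt hs)
  | succ n ih =>
    rw [reachCDF]
    split
    · rename_i hxQ
      exact if_neg fun hqs => (hq i x hxQ).not_gt (hqs.trans_lt hs)
    · exact Finset.sum_eq_zero fun j _ => by
        rw [ih j _ (by linarith [hK i x]), mul_zero]

theorem nonneg_of_mem_attainableCosts (hK : ∀ i x, 0 ≤ K i x)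
    (hq : ∀ i, ∀ x ∈ Q, 0 ≤ q i x) (hs : s ∈ attainableCosts Q F K q p i x) : 0 ≤ s := by
  by_contra! hneg
  have hzero : costCDF Q F K q p i x s = 0 := by
    simp [costCDF, reachCDF_of_neg hK hq _ i x hneg]
  exact (show 0 < costCDF Q F K q p i x s from hs).ne' hzero

theorem attainableCosts_nonempty
    (hAS : Tendsto (fun s => costCDF Q F K q p i x s) atTop (nhds 1)) :
    (attainableCosts Q F K q p i x).Nonempty :=
  (hAS.eventually (eventually_gt_nhds one_pos)).exists

theorem attainableCosts_of_mem (hx : x ∈ Q) : attainableCosts Q F K q p i x = Ici (q i x) := by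
  have hreach : ∀ n s, reachCDF Q F K q p n i x s = if q i x ≤ s then 1 else 0 := by
    rintro (_ | n) s <;> simp [reachCDF, hx]
  ext s
  by_cases h : q i x ≤ s <;> simp [attainableCosts, costCDF, hreach, h]

theorem minCost_of_mem (hx : x ∈ Q) : minCost Q F K q p i x = q i x := by
  rw [minCost_eq_sInf_attainableCosts, attainableCosts_of_mem hx, csInf_Ici]

theorem minCost_of_notMem (hK : ∀ i x, 0 ≤ K i x) (hq : ∀ i, ∀ x ∈ Q, 0 ≤ q i x)
    (hp0 : ∀ i j, 0 ≤ p i j) (hp1 : ∀ i, ∑ j, p i j = 1)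
    (hAS : ∀ j, Tendsto (fun s => costCDF Q F K q p j (F i x) s) atTop (nhds 1)) (hx : x ∉ Q) :
    minCost Q F K q p i x =
      K i x + sInf ((fun j => minCost Q F K q p j (F i x)) '' {j | 0 < p i j}) := by
  have hJ : {j | 0 < p i j}.Nonempty := by
    obtain ⟨j, -, hj⟩ := Finset.exists_lt_of_sum_lt (s := Finset.univ) (f := 0) (g := p i)
      (by simp [hp1 i])
    exact ⟨j, hj⟩
  have hne : ∀ j ∈ {j | 0 < p i j}, (attainableCosts Q F K q p j (F i x)).Nonempty :=
    fun j _ => attainableCosts_nonempty (hAS j)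
  set U := ⋃ j ∈ {j | 0 < p i j}, attainableCosts Q F K q p j (F i x)
  have hU : U.Nonempty := by
    obtain ⟨j, hj⟩ := hJ
    exact ⟨_, mem_biUnion hj (hne j hj).some_mem⟩
  have hbdd : BddBelow U := by
    refine ⟨0, fun s hs => ?_⟩
    obtain ⟨j, -, hs⟩ := mem_iUnion₂.1 hs
    exact nonneg_of_mem_attainableCosts hK hq hs
  calc minCost Q F K q p i x = sInf ((K i x + ·) '' U) := by
        rw [minCost_eq_sInf_attainableCosts, attainableCosts_of_notMem hp0 hp1 hx]
    _ = K i x + sInf U := ((OrderIso.addLeft (K i x)).map_csInf' hU hbdd).symm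
    _ = K i x + sInf ((fun j => minCost Q F K q p j (F i x)) '' {j | 0 < p i j}) := by
        rw [csInf_biUnion_eq_csInf_image hJ hne hbdd]
        rfl

end RouteSwitching

theorem minCost_recursion_general {X : Type*} {M : ℕ} (Q : Set X)
    (F : Fin M → X → X) (K : Fin M → X → ℝ) (q : Fin M → X → ℝ)
    (p : Fin M → Fin M → ℝ)
    (hK : ∀ i x, 0 < K i x) (hq : ∀ i, ∀ x ∈ Q, 0 ≤ q i x)
    (hp0 : ∀ i j, 0 ≤ p i j) (hp1 : ∀ i, ∑ j, p i j = 1)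
    (hAS : ∀ (i : Fin M) (x : X),
      Filter.Tendsto (fun s => costCDF Q F K q p i x s) Filter.atTop (nhds 1)) :
    (∀ i : Fin M, ∀ x ∉ Q,
        minCost Q F K q p i x
          = K i x + sInf {t : ℝ | ∃ j : Fin M, 0 < p i j ∧
              t = minCost Q F K q p j (F i x)}) ∧
    (∀ i : Fin M, ∀ x ∈ Q, minCost Q F K q p i x = q i x) := by
  refine ⟨fun i x hx => ?_, fun i x hx => minCost_of_mem hx⟩
  rw [minCost_of_notMem (fun i x => (hK i x).le) hq hp0 hp1 (fun j => hAS j _) hx]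
  congr 2
  ext t
  simp [eq_comm]

/-- **Dynamic programming relation for the minimum attainable cost:**
if the state space is finite and every trajectory reaches `Q` almost surely,
then `s_i⁰(x) = K_i(x) + min { s_j⁰(F_i(x)) : p_{ij} > 0 }` off `Q` and
`s_i⁰ = q_i` on `Q`. -/
theorem minCost_recursion {X : Type*} [Fintype X] {M : ℕ} (Q : Set X)
    (F : Fin M → X → X) (K : Fin M → X → ℝ) (q : Fin M → X → ℝ)
    (p : Fin M → Fin M → ℝ)
    (hK : ∀ i x, 0 < K i x) (hq : ∀ i, ∀ x ∈ Q, 0 ≤ q i x)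
    (hp0 : ∀ i j, 0 ≤ p i j) (hp1 : ∀ i, ∑ j, p i j = 1)
    (hAS : ∀ (i : Fin M) (x : X),
      Filter.Tendsto (fun s => costCDF Q F K q p i x s) Filter.atTop (nhds 1)) :
    (∀ i : Fin M, ∀ x ∉ Q,
        minCost Q F K q p i x
          = K i x + sInf {t : ℝ | ∃ j : Fin M, 0 < p i j ∧
              t = minCost Q F K q p j (F i x)}) ∧
    (∀ i : Fin M, ∀ x ∈ Q, minCost Q F K q p i x = q i x) :=
  minCost_recursion_general Q F K q p hK hq hp0 hp1 hAS
end

section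
/- Consider the 1-D finite-difference scheme W_{i,k}^{n+1} = W_{i,k}^n + (f_{ik}Δs/Δx)(W_{i,k+1}^n − W_{i,k}^n) + Σ_{j≠i} λ_{ij} Δs (W_j − W_i)(x_k + f_{ik}Δs, s_n), where the last terms are evaluated by linear interpolation between grid indices k and k+1. If 0 < f_{ik}Δs ≤ Δx and Δs·Σ_{j≠i} λ_{ij} ≤ 1 for all i, then each updated value W_{i,k}^{n+1} is a convex combination of values of W^n, and hence the scheme is monotone and L^∞-stable: min over all (j,m) of W_{j,m}^n ≤ W_{i,k}^{n+1} ≤ max over all (j,m) of W_{j,m}^n. -/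
/-- One step of the 1-D Eulerian finite-difference scheme
`W_{i,k}^{n+1} = W_{i,k}^n + (f_{ik}Δs/Δx)(W_{i,k+1}^n − W_{i,k}^n)
 + Σ_{j≠i} λ_{ij}Δs·(W_j − W_i)(x_k + f_{ik}Δs, s_n)`,
with the last terms evaluated by linear interpolation between grid indices
`k` and `k+1` (weights `1−θ` and `θ`, `θ = f_{ik}Δs/Δx`). -/
noncomputable def fdUpdate {M : ℕ} (Δx Δs : ℝ) (f : Fin M → ℤ → ℝ)
    (lam : Fin M → Fin M → ℝ) (W : Fin M → ℤ → ℝ) (i : Fin M) (k : ℤ) : ℝ :=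
  W i k + (f i k * Δs / Δx) * (W i (k + 1) - W i k)
    + ∑ j ∈ Finset.univ.filter (· ≠ i), lam i j * Δs *
        ((1 - f i k * Δs / Δx) * (W j k - W i k)
          + (f i k * Δs / Δx) * (W j (k + 1) - W i (k + 1)))

open Finset

def gridInterp (θ : ℝ) (V : ℤ → ℝ) (k : ℤ) : ℝ :=
  (1 - θ) * V k + θ * V (k + 1)

theorem gridInterp_const (θ c : ℝ) (k : ℤ) : gridInterp θ (fun _ => c) k = c := by
  simp only [gridInterp]
  ring

theorem gridInterp_mono {θ : ℝ} (hθ₀ : 0 ≤ θ) (hθ₁ : θ ≤ 1) {V V' : ℤ → ℝ} (hV : V ≤ V')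
    (k : ℤ) : gridInterp θ V k ≤ gridInterp θ V' k := by
  unfold gridInterp
  have : 0 ≤ 1 - θ := sub_nonneg.mpr hθ₁
  gcongr <;> exact hV _

section

variable {M : ℕ} (Δx Δs : ℝ) (f : Fin M → ℤ → ℝ) (lam : Fin M → Fin M → ℝ)

/-- The scheme interpolates every component at the same foot point `x_k + f_{ik}Δs`, so the
update is the own interpolated value with weight `1 - Δs Σ_{j≠i} λ_{ij}` plus the other
interpolated values with weights `λ_{ij}Δs`. -/
theorem fdUpdate_eq_weighted_sum (W : Fin M → ℤ → ℝ) (i : Fin M) (k : ℤ) :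
    fdUpdate Δx Δs f lam W i k =
      (1 - Δs * ∑ j ∈ univ.filter (· ≠ i), lam i j) * gridInterp (f i k * Δs / Δx) (W i) k
        + ∑ j ∈ univ.filter (· ≠ i), lam i j * Δs * gridInterp (f i k * Δs / Δx) (W j) k := by
  set θ := f i k * Δs / Δx
  have hsum : ∑ j ∈ univ.filter (· ≠ i), lam i j * Δs *
        ((1 - θ) * (W j k - W i k) + θ * (W j (k + 1) - W i (k + 1)))
      = ∑ j ∈ univ.filter (· ≠ i), lam i j * Δs * gridInterp θ (W j) k
        - (Δs * ∑ j ∈ univ.filter (· ≠ i), lam i j) * gridInterp θ (W i) k := by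
    rw [mul_sum, sum_mul, ← sum_sub_distrib]
    exact sum_congr rfl fun j _ => by simp only [gridInterp]; ring
  rw [fdUpdate, hsum]
  simp only [gridInterp]
  ring

theorem fdUpdate_const (c : ℝ) (i : Fin M) (k : ℤ) :
    fdUpdate Δx Δs f lam (fun _ _ => c) i k = c := by
  simp [fdUpdate]

variable {Δx Δs f lam}

theorem fdUpdate_mono {i : Fin M} {k : ℤ} (hθ₀ : 0 ≤ f i k * Δs / Δx)
    (hθ₁ : f i k * Δs / Δx ≤ 1) (hΔs : 0 ≤ Δs) (hlam : ∀ j, j ≠ i → 0 ≤ lam i j)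
    (hsum : Δs * ∑ j ∈ univ.filter (· ≠ i), lam i j ≤ 1) {W W' : Fin M → ℤ → ℝ}
    (hW : W ≤ W') : fdUpdate Δx Δs f lam W i k ≤ fdUpdate Δx Δs f lam W' i k := by
  rw [fdUpdate_eq_weighted_sum, fdUpdate_eq_weighted_sum]
  have hself : 0 ≤ 1 - Δs * ∑ j ∈ univ.filter (· ≠ i), lam i j := sub_nonneg.mpr hsum
  gcongr with j hj
  · exact gridInterp_mono hθ₀ hθ₁ (hW i) k
  · exact mul_nonneg (hlam j (mem_filter.mp hj).2) hΔs
  · exact gridInterp_mono hθ₀ hθ₁ (hW j) k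

end

/-- **Monotonicity and `L^∞`-stability of the 1-D finite-difference scheme:**
if `0 < f_{ik}Δs ≤ Δx` and `Δs·Σ_{j≠i} λ_{ij} ≤ 1`, each updated value is a
convex combination of the previous values; hence the update is monotone and
`min_{j,m} W_{j,m} ≤ W'_{i,k} ≤ max_{j,m} W_{j,m}`. -/
theorem fdUpdate_monotone_stable {M : ℕ} (Δx Δs : ℝ)
    (f : Fin M → ℤ → ℝ) (lam : Fin M → Fin M → ℝ)
    (hΔx : 0 < Δx) (hΔs : 0 < Δs)
    (hf : ∀ i k, 0 < f i k) (hcfl : ∀ i k, f i k * Δs ≤ Δx)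
    (hlam : ∀ i j, j ≠ i → 0 ≤ lam i j)
    (hsum : ∀ i, Δs * ∑ j ∈ Finset.univ.filter (· ≠ i), lam i j ≤ 1) :
    (∀ W Wt : Fin M → ℤ → ℝ, (∀ j m, W j m ≤ Wt j m) →
      ∀ i k, fdUpdate Δx Δs f lam W i k ≤ fdUpdate Δx Δs f lam Wt i k) ∧
    (∀ W : Fin M → ℤ → ℝ, ∀ b B : ℝ,
      (∀ j m, b ≤ W j m) → (∀ j m, W j m ≤ B) →
      ∀ i k, b ≤ fdUpdate Δx Δs f lam W i k ∧
        fdUpdate Δx Δs f lam W i k ≤ B) := by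
  have mono : ∀ W Wt : Fin M → ℤ → ℝ, (∀ j m, W j m ≤ Wt j m) →
      ∀ i k, fdUpdate Δx Δs f lam W i k ≤ fdUpdate Δx Δs f lam Wt i k :=
    fun W Wt hW i k =>
      fdUpdate_mono (div_nonneg (mul_pos (hf i k) hΔs).le hΔx.le)
        ((div_le_one hΔx).mpr (hcfl i k)) hΔs.le (hlam i) (hsum i) fun j m => hW j m
  refine ⟨mono, fun W b B hb hB i k => ⟨?_, ?_⟩⟩
  · simpa only [fdUpdate_const] using mono (fun _ _ => b) W hb i k
  · simpa only [fdUpdate_const] using mono W (fun _ _ => B) hB i k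
end

section
/- Let L be the set of rate matrices with entries in the boxes [a_{ij}, b_{ij}], and let w_i⁻ and w_i⁺ be the solutions of the discrete recursions w_i^±(x,s) = w_i^±(x̃, s̃) + τ · opt_{Λ∈L} Σ_{j≠i} λ_{ij}(w_j^±(x̃,s̃) − w_i^±(x̃,s̃)) (opt = min for w⁻, max for w⁺), with common boundary data, where x̃ = F_i(x), s̃ = s − τC_i(x), and τ·Σ_{j≠i} b_{ij} ≤ 1. Then for any fixed admissible Λ ∈ L, the corresponding solution w_i^Λ of the same recursion with that Λ satisfies w_i⁻(x,s) ≤ w_i^Λ(x,s) ≤ w_i⁺(x,s) for all x, i, and s. -/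
/-!
Each explicit step `u ↦ uᵢ + τ Σ_{j≠i} λᵢⱼ (uⱼ - uᵢ)` with `λ ≥ 0` and `τ Σ λᵢⱼ ≤ 1` is a
convex combination of the previous-level values, hence monotone; and replacing `λᵢⱼ d` by its
minimum (maximum) over the box `[aᵢⱼ, bᵢⱼ]` can only decrease (increase) it. Since every step
lowers `s` by at least `τ c_min > 0`, induction on `⌈s / (τ c_min)⌉`, starting from the common
data for `s ≤ 0` and on `Q`, gives `w⁻ ≤ w^Λ ≤ w⁺`.
-/

open Finset

lemma min_mul_le_mul_of_mem_Icc {a b c d : ℝ} (hac : a ≤ c) (hcb : c ≤ b) :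
    min (a * d) (b * d) ≤ c * d := by
  rcases le_total 0 d with hd | hd
  · exact (min_le_left _ _).trans (mul_le_mul_of_nonneg_right hac hd)
  · exact (min_le_right _ _).trans (mul_le_mul_of_nonpos_right hcb hd)

lemma mul_le_max_mul_of_mem_Icc {a b c d : ℝ} (hac : a ≤ c) (hcb : c ≤ b) :
    c * d ≤ max (a * d) (b * d) := by
  rcases le_total 0 d with hd | hd
  · exact (mul_le_mul_of_nonneg_right hcb hd).trans (le_max_right _ _)
  · exact (mul_le_mul_of_nonpos_right hac hd).trans (le_max_left _ _)

section ExplicitStep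

variable {ι : Type*} {s : Finset ι} {τ : ℝ}

lemma add_mul_sum_mul_sub_le_of_le {lam : ι → ℝ} (hτ : 0 ≤ τ) (hlam : ∀ j ∈ s, 0 ≤ lam j)
    (hsum : τ * ∑ j ∈ s, lam j ≤ 1) {u₀ v₀ : ℝ} {u v : ι → ℝ} (h₀ : u₀ ≤ v₀)
    (h : ∀ j ∈ s, u j ≤ v j) :
    u₀ + τ * ∑ j ∈ s, lam j * (u j - u₀) ≤ v₀ + τ * ∑ j ∈ s, lam j * (v j - v₀) := by
  have hdiff : v₀ + τ * ∑ j ∈ s, lam j * (v j - v₀) - (u₀ + τ * ∑ j ∈ s, lam j * (u j - u₀))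
      = (v₀ - u₀) * (1 - τ * ∑ j ∈ s, lam j) + τ * ∑ j ∈ s, lam j * (v j - u j) := by
    simp only [mul_sub, sum_sub_distrib, ← sum_mul]
    ring
  have hcenter : 0 ≤ (v₀ - u₀) * (1 - τ * ∑ j ∈ s, lam j) :=
    mul_nonneg (sub_nonneg.2 h₀) (sub_nonneg.2 hsum)
  have hneighbours : 0 ≤ τ * ∑ j ∈ s, lam j * (v j - u j) :=
    mul_nonneg hτ (sum_nonneg fun j hj => mul_nonneg (hlam j hj) (sub_nonneg.2 (h j hj)))
  linarith

variable {a b lam : ι → ℝ}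

lemma mul_sum_le_one_of_le (hτ : 0 ≤ τ) (hlam : ∀ j ∈ s, lam j ≤ b j)
    (hstep : τ * ∑ j ∈ s, b j ≤ 1) : τ * ∑ j ∈ s, lam j ≤ 1 :=
  (mul_le_mul_of_nonneg_left (sum_le_sum hlam) hτ).trans hstep

lemma add_mul_sum_min_le_of_le (hτ : 0 ≤ τ) (ha : ∀ j ∈ s, 0 ≤ a j)
    (hlam : ∀ j ∈ s, a j ≤ lam j ∧ lam j ≤ b j) (hstep : τ * ∑ j ∈ s, b j ≤ 1)
    {u₀ v₀ : ℝ} {u v : ι → ℝ} (h₀ : u₀ ≤ v₀) (h : ∀ j ∈ s, u j ≤ v j) :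
    u₀ + τ * ∑ j ∈ s, min (a j * (u j - u₀)) (b j * (u j - u₀))
      ≤ v₀ + τ * ∑ j ∈ s, lam j * (v j - v₀) :=
  calc u₀ + τ * ∑ j ∈ s, min (a j * (u j - u₀)) (b j * (u j - u₀))
      ≤ u₀ + τ * ∑ j ∈ s, lam j * (u j - u₀) :=
        add_le_add_right (mul_le_mul_of_nonneg_left (sum_le_sum fun j hj =>
          min_mul_le_mul_of_mem_Icc (hlam j hj).1 (hlam j hj).2) hτ) _
    _ ≤ v₀ + τ * ∑ j ∈ s, lam j * (v j - v₀) :=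
        add_mul_sum_mul_sub_le_of_le hτ (fun j hj => (ha j hj).trans (hlam j hj).1)
          (mul_sum_le_one_of_le hτ (fun j hj => (hlam j hj).2) hstep) h₀ h

lemma add_mul_sum_le_max_of_le (hτ : 0 ≤ τ) (ha : ∀ j ∈ s, 0 ≤ a j)
    (hlam : ∀ j ∈ s, a j ≤ lam j ∧ lam j ≤ b j) (hstep : τ * ∑ j ∈ s, b j ≤ 1)
    {u₀ v₀ : ℝ} {u v : ι → ℝ} (h₀ : u₀ ≤ v₀) (h : ∀ j ∈ s, u j ≤ v j) :
    u₀ + τ * ∑ j ∈ s, lam j * (u j - u₀)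
      ≤ v₀ + τ * ∑ j ∈ s, max (a j * (v j - v₀)) (b j * (v j - v₀)) :=
  calc u₀ + τ * ∑ j ∈ s, lam j * (u j - u₀)
      ≤ v₀ + τ * ∑ j ∈ s, lam j * (v j - v₀) :=
        add_mul_sum_mul_sub_le_of_le hτ (fun j hj => (ha j hj).trans (hlam j hj).1)
          (mul_sum_le_one_of_le hτ (fun j hj => (hlam j hj).2) hstep) h₀ h
    _ ≤ v₀ + τ * ∑ j ∈ s, max (a j * (v j - v₀)) (b j * (v j - v₀)) :=
        add_le_add_right (mul_le_mul_of_nonneg_left (sum_le_sum fun j hj =>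
          mul_le_max_mul_of_mem_Icc (hlam j hj).1 (hlam j hj).2) hτ) _

end ExplicitStep

lemma Real.forall_of_forall_le_sub_imp {P : ℝ → Prop} {δ : ℝ} (hδ : 0 < δ)
    (hbase : ∀ s ≤ 0, P s) (hstep : ∀ s, 0 < s → (∀ t ≤ s - δ, P t) → P s) (s : ℝ) : P s := by
  have hlevel : ∀ n : ℕ, ∀ s ≤ n * δ, P s := by
    intro n
    induction n with
    | zero => simpa using hbase
    | succ n ih =>
      intro s hs
      rcases le_or_gt s 0 with hs₀ | hs₀
      · exact hbase s hs₀
      · refine hstep s hs₀ fun t ht => ih t ?_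
        push_cast at hs
        linarith
  obtain ⟨n, hn⟩ := exists_nat_ge (s / δ)
  exact hlevel n s ((div_le_iff₀ hδ).1 hn)

/-- **CDF bounds sandwich every fixed admissible rate matrix.**
`wm` and `wp` solve the discrete recursions with, respectively, the pointwise
minimal and maximal choice of box-constrained rates
(`min_{λ∈[a,b]} λd = min(ad, bd)`, `max_{λ∈[a,b]} λd = max(ad, bd)`), while
`wl` solves the recursion with a fixed admissible rate matrix `λ ∈ [a,b]`.
All three share the same boundary data `g` (on `Q` or for `s ≤ 0`), the
running costs satisfy `C_i ≥ c_min > 0`, and the step condition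
`τ·Σ_{j≠i} b_{ij} ≤ 1` holds.  Then `wm ≤ wl ≤ wp` everywhere. -/
theorem cdf_bounds_sandwich {X : Type*} {M : ℕ} (Q : Set X)
    (F : Fin M → X → X) (C : Fin M → X → ℝ) (cmin : ℝ)
    (hcmin : 0 < cmin) (hC : ∀ i x, cmin ≤ C i x)
    (τ : ℝ) (hτ : 0 < τ)
    (a b lam : Fin M → Fin M → ℝ)
    (hab : ∀ i j, i ≠ j → 0 ≤ a i j ∧ a i j ≤ b i j)
    (hlam : ∀ i j, i ≠ j → a i j ≤ lam i j ∧ lam i j ≤ b i j)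
    (hstep : ∀ i, τ * ∑ j ∈ Finset.univ.filter (· ≠ i), b i j ≤ 1)
    (g : Fin M → X → ℝ → ℝ)
    (wm wp wl : Fin M → X → ℝ → ℝ)
    (hbm : ∀ i x s, (x ∈ Q ∨ s ≤ 0) → wm i x s = g i x s)
    (hbp : ∀ i x s, (x ∈ Q ∨ s ≤ 0) → wp i x s = g i x s)
    (hbl : ∀ i x s, (x ∈ Q ∨ s ≤ 0) → wl i x s = g i x s)
    (hrecm : ∀ i : Fin M, ∀ x ∉ Q, ∀ s : ℝ, 0 < s →
      wm i x s = wm i (F i x) (s - τ * C i x)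
        + τ * ∑ j ∈ Finset.univ.filter (· ≠ i),
            min (a i j * (wm j (F i x) (s - τ * C i x)
                    - wm i (F i x) (s - τ * C i x)))
                (b i j * (wm j (F i x) (s - τ * C i x)
                    - wm i (F i x) (s - τ * C i x))))
    (hrecp : ∀ i : Fin M, ∀ x ∉ Q, ∀ s : ℝ, 0 < s →
      wp i x s = wp i (F i x) (s - τ * C i x)
        + τ * ∑ j ∈ Finset.univ.filter (· ≠ i),
            max (a i j * (wp j (F i x) (s - τ * C i x)
                    - wp i (F i x) (s - τ * C i x)))
                (b i j * (wp j (F i x) (s - τ * C i x)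
                    - wp i (F i x) (s - τ * C i x))))
    (hrecl : ∀ i : Fin M, ∀ x ∉ Q, ∀ s : ℝ, 0 < s →
      wl i x s = wl i (F i x) (s - τ * C i x)
        + τ * ∑ j ∈ Finset.univ.filter (· ≠ i),
            lam i j * (wl j (F i x) (s - τ * C i x)
                - wl i (F i x) (s - τ * C i x))) :
    ∀ (i : Fin M) (x : X) (s : ℝ),
      wm i x s ≤ wl i x s ∧ wl i x s ≤ wp i x s := by
  suffices h : ∀ s i x, wm i x s ≤ wl i x s ∧ wl i x s ≤ wp i x s from fun i x s => h s i x
  refine Real.forall_of_forall_le_sub_imp (mul_pos hτ hcmin) ?_ fun s hs ih i x => ?_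
  · intro s hs i x
    simp only [hbm i x s (.inr hs), hbl i x s (.inr hs), hbp i x s (.inr hs), le_refl, and_self]
  by_cases hx : x ∈ Q
  · simp only [hbm i x s (.inl hx), hbl i x s (.inl hx), hbp i x s (.inl hx), le_refl, and_self]
  have hprev := fun j => ih (s - τ * C i x) (by nlinarith [hC i x]) j (F i x)
  have ha : ∀ j ∈ univ.filter (· ≠ i), 0 ≤ a i j := fun j hj =>
    (hab i j (Ne.symm (mem_filter.1 hj).2)).1
  have hlam' : ∀ j ∈ univ.filter (· ≠ i), a i j ≤ lam i j ∧ lam i j ≤ b i j := fun j hj =>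
    hlam i j (Ne.symm (mem_filter.1 hj).2)
  rw [hrecm i x hx s hs, hrecl i x hx s hs, hrecp i x hx s hs]
  exact ⟨add_mul_sum_min_le_of_le hτ.le ha hlam' (hstep i) (hprev i).1 fun j _ => (hprev j).1,
    add_mul_sum_le_max_of_le hτ.le ha hlam' (hstep i) (hprev i).2 fun j _ => (hprev j).2⟩
end
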